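/- arXiv:1711.07625 — 3 statements merged into one kernel-verified Lean document; each statement's English description precedes it below -/
import Mathlib

section
/- If the block matrix [[A, Bᵀ],[B, C]] is positive semidefinite, where A is n×n, C is m×m, and B is m×n real matrices, then the operator norm of B satisfies ‖B‖ ≤ √(‖A‖·‖C‖). -/
open Matrix
open scoped RealInnerProductSpace

noncomputable def singVals {n : ℕ} (M : Matrix (Fin n) (Fin n) ℝ) (i : Fin n) : ℝ :=
  Real.sqrt ((show (Mᵀ * M).IsHermitian by
    simpa using Matrix.isHermitian_conjTranspose_mul_self M).eigenvalues i)

noncomputable def rdist {n : ℕ} (P Q : Matrix (Fin n) (Fin n) ℝ) : ℝ :=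
  Real.sqrt (∑ i, (Real.log (singVals (P * Q⁻¹) i)) ^ 2)

noncomputable def matSpectralNorm {m n : ℕ} (M : Matrix (Fin m) (Fin n) ℝ) : ℝ :=
  ‖(LinearMap.toContinuousLinearMap (Matrix.toEuclideanLin M))‖

/-! Cauchy–Schwarz for the positive semidefinite form of the block matrix, evaluated at `(x, 0)`
and `(0, y)`, gives `(yᵀBx)² ≤ (xᵀAx)(yᵀCy) ≤ ‖A‖‖C‖‖x‖²‖y‖²`; taking `y = Bx` yields
`‖Bx‖ ≤ √(‖A‖‖C‖)‖x‖`. -/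

namespace Matrix

variable {ι κ : Type*} [Fintype ι] [Fintype κ]

theorem PosSemidef.sq_dotProduct_mulVec_le {M : Matrix ι ι ℝ} (hM : M.PosSemidef)
    (v w : ι → ℝ) : (v ⬝ᵥ M *ᵥ w) ^ 2 ≤ (v ⬝ᵥ M *ᵥ v) * (w ⬝ᵥ M *ᵥ w) := by
  classical
  have hsymm : (toLinearMap₂' ℝ M).IsSymm := ⟨fun x y => by
    simp only [toLinearMap₂'_apply', RingHom.id_apply, dotProduct_mulVec, ← mulVec_transpose,
      dotProduct_comm x, ← conjTranspose_eq_transpose_of_trivial, hM.isHermitian.eq]⟩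
  have hnonneg : ∀ x, 0 ≤ (toLinearMap₂' ℝ M : LinearMap.BilinForm ℝ (ι → ℝ)) x x := by
    simpa [toLinearMap₂'_apply'] using hM.dotProduct_mulVec_nonneg
  simpa only [toLinearMap₂'_apply'] using
    LinearMap.BilinForm.apply_sq_le_of_symm _ hnonneg hsymm v w

theorem PosSemidef.sq_dotProduct_mulVec_le_of_fromBlocks {A : Matrix ι ι ℝ} {B : Matrix κ ι ℝ}
    {C : Matrix κ κ ℝ} (h : (fromBlocks A Bᵀ B C).PosSemidef) (x : ι → ℝ) (y : κ → ℝ) :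
    (y ⬝ᵥ B *ᵥ x) ^ 2 ≤ (x ⬝ᵥ A *ᵥ x) * (y ⬝ᵥ C *ᵥ y) := by
  have hcs := h.sq_dotProduct_mulVec_le (Sum.elim x 0) (Sum.elim 0 y)
  simp only [fromBlocks_mulVec, sumElim_dotProduct_sumElim, Sum.elim_comp_inl, Sum.elim_comp_inr,
    mulVec_zero, add_zero, zero_add, zero_dotProduct, mulVec_transpose] at hcs
  rwa [dotProduct_mulVec, dotProduct_comm]

end Matrix

theorem real_inner_toEuclideanLin {ι κ : Type*} [Fintype ι] [Fintype κ] [DecidableEq ι]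
    (M : Matrix κ ι ℝ) (w : EuclideanSpace ℝ κ) (u : EuclideanSpace ℝ ι) :
    ⟪w, toEuclideanLin M u⟫ = WithLp.ofLp w ⬝ᵥ M *ᵥ WithLp.ofLp u := by
  rw [EuclideanSpace.inner_eq_star_dotProduct, star_trivial, dotProduct_comm]
  rfl

namespace ContinuousLinearMap

variable {E F : Type*} [NormedAddCommGroup E] [InnerProductSpace ℝ E]
  [NormedAddCommGroup F] [InnerProductSpace ℝ F]

theorem real_inner_apply_self_le_opNorm_mul_sq (a : E →L[ℝ] E) (u : E) :
    ⟪u, a u⟫ ≤ ‖a‖ * ‖u‖ ^ 2 :=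
  calc ⟪u, a u⟫ ≤ ‖u‖ * ‖a u‖ := real_inner_le_norm _ _
    _ ≤ ‖u‖ * (‖a‖ * ‖u‖) := by gcongr; exact a.le_opNorm u
    _ = ‖a‖ * ‖u‖ ^ 2 := by ring

theorem opNorm_le_of_sq_inner_le (b : E →L[ℝ] F) {K : ℝ} (hK : 0 ≤ K)
    (h : ∀ u w, ⟪w, b u⟫ ^ 2 ≤ K ^ 2 * ‖u‖ ^ 2 * ‖w‖ ^ 2) : ‖b‖ ≤ K := by
  refine b.opNorm_le_bound hK fun u => ?_
  -- test against `w = b u`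
  have hbu : (‖b u‖ ^ 2) ^ 2 ≤ (K * ‖u‖) ^ 2 * ‖b u‖ ^ 2 := by
    simpa [real_inner_self_eq_norm_sq, mul_pow] using h u (b u)
  rcases (norm_nonneg (b u)).eq_or_lt with hzero | hpos
  · rw [← hzero]; positivity
  · have : ‖b u‖ ^ 2 ≤ (K * ‖u‖) ^ 2 := by nlinarith [pow_pos hpos 2]
    exact (pow_le_pow_iff_left₀ (norm_nonneg _) (by positivity) two_ne_zero).mp this

end ContinuousLinearMap

theorem dotProduct_mulVec_self_le_matSpectralNorm {n : ℕ} (M : Matrix (Fin n) (Fin n) ℝ)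
    (u : EuclideanSpace ℝ (Fin n)) :
    WithLp.ofLp u ⬝ᵥ M *ᵥ WithLp.ofLp u ≤ matSpectralNorm M * ‖u‖ ^ 2 := by
  rw [← real_inner_toEuclideanLin]
  exact (toEuclideanLin M).toContinuousLinearMap.real_inner_apply_self_le_opNorm_mul_sq u

/-- If the block matrix [[A, Bᵀ],[B, C]] is positive semidefinite, then
    the spectral norm of B satisfies ‖B‖ ≤ √(‖A‖·‖C‖). -/
theorem block_psd_offdiag_norm_bound {n m : ℕ}
    (A : Matrix (Fin n) (Fin n) ℝ) (C : Matrix (Fin m) (Fin m) ℝ)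
    (B : Matrix (Fin m) (Fin n) ℝ)
    (h : (Matrix.fromBlocks A Bᵀ B C).PosSemidef) :
    matSpectralNorm B ≤ Real.sqrt (matSpectralNorm A * matSpectralNorm C) := by
  have hK : √(matSpectralNorm A * matSpectralNorm C) ^ 2 =
      matSpectralNorm A * matSpectralNorm C :=
    Real.sq_sqrt (mul_nonneg (norm_nonneg _) (norm_nonneg _))
  have hC : C.PosSemidef := h.submatrix Sum.inr
  refine ContinuousLinearMap.opNorm_le_of_sq_inner_le _ (Real.sqrt_nonneg _) fun u w => ?_
  calc ⟪w, toEuclideanLin B u⟫ ^ 2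
      ≤ (WithLp.ofLp u ⬝ᵥ A *ᵥ WithLp.ofLp u) * (WithLp.ofLp w ⬝ᵥ C *ᵥ WithLp.ofLp w) := by
        rw [real_inner_toEuclideanLin]
        exact h.sq_dotProduct_mulVec_le_of_fromBlocks _ _
    _ ≤ (matSpectralNorm A * ‖u‖ ^ 2) * (matSpectralNorm C * ‖w‖ ^ 2) :=
        mul_le_mul (dotProduct_mulVec_self_le_matSpectralNorm A u)
          (dotProduct_mulVec_self_le_matSpectralNorm C w)
          (by simpa using hC.dotProduct_mulVec_nonneg _)
          (mul_nonneg (norm_nonneg _) (sq_nonneg _))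
    _ = _ := by rw [hK]; ring
end

section
/- Suppose two sequences of positive definite matrices Σ_k and Σ*_k satisfy δ(Σ_k, Σ*_k) ≤ υ^k · δ(Σ_0, Σ*_0) for some 0 ≤ υ ≤ 1, and suppose Σ*_k ≤ Σ_k for all k. Then ‖Σ_k − Σ*_k‖ ≤ κ·σ·υ^k, where κ = e^{δ(Σ_0, Σ*_0)} − 1 and σ is any uniform upper bound on ‖Σ_k‖ and ‖Σ*_k‖. -/
open Matrix

/-!
With `R = Q^{1/2}`, the symmetric matrix `R⁻¹ P R⁻¹` is similar to `P Q⁻¹`, so its eigenvalues are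
at most `‖P Q⁻¹‖`, which is the largest singular value of `P Q⁻¹` and hence at most `e^{δ(P,Q)}`.
Conjugating back by `R` gives `Q ≤ P ≤ e^{δ(P,Q)} Q`, so `0 ≤ P - Q ≤ (e^{δ(P,Q)} - 1) Q` and
`‖P - Q‖ ≤ (e^{δ(P,Q)} - 1) ‖Q‖`. Convexity of `exp` turns `δ_k ≤ υ^k δ_0` into
`e^{δ_k} - 1 ≤ (e^{δ_0} - 1) υ^k`.
-/

open scoped Matrix.Norms.L2Operator MatrixOrder

section RealCFC

variable {A : Type*} [NormedRing A] [StarRing A] [NormedAlgebra ℝ A] [CompleteSpace A]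
  [NormOneClass A] [PartialOrder A] [StarOrderedRing A]
  [IsometricContinuousFunctionalCalculus ℝ A IsSelfAdjoint] [NonnegSpectrumClass ℝ A]

lemma norm_le_norm_of_nonneg_of_le {a b : A} (ha : 0 ≤ a) (hab : a ≤ b) : ‖a‖ ≤ ‖b‖ := by
  have hb : b ≤ algebraMap ℝ A ‖b‖ :=
    le_algebraMap_of_spectrum_le (fun x hx => (Real.le_norm_self x).trans
      (spectrum.norm_le_norm_of_mem hx)) (IsSelfAdjoint.of_nonneg (ha.trans hab))
  rw [← cfc_id ℝ a]
  refine norm_cfc_le (norm_nonneg b) fun x hx => ?_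
  rw [id, Real.norm_of_nonneg (spectrum_nonneg_of_nonneg ha hx)]
  exact (le_algebraMap_iff_spectrum_le (IsSelfAdjoint.of_nonneg ha)).1 (hab.trans hb) x hx

end RealCFC

namespace Matrix

variable {n : Type*} [Fintype n] [DecidableEq n]

lemma le_norm_mul_inv_smul {P Q : Matrix n n ℝ} (hP : P.IsHermitian) (hQ : Q.PosDef) :
    P ≤ ‖P * Q⁻¹‖ • Q := by
  -- `NormOneClass`, needed to bound the spectrum by the norm, holds only for nonempty `n`.
  nontriviality Matrix n n ℝ
  set R := CFC.sqrt Q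
  have hRR : R * R = Q := CFC.sqrt_mul_sqrt_self Q hQ.posSemidef.nonneg
  have hR : IsUnit R := CFC.isUnit_sqrt_iff_isStrictlyPositive.2 hQ.isStrictlyPositive
  have hRdet : IsUnit R.det := (isUnit_iff_isUnit_det R).1 hR
  have hsimilar : R⁻¹ * P * R⁻¹ = (↑hR.unit⁻¹ : Matrix n n ℝ) * (P * Q⁻¹) * hR.unit := by
    rw [coe_units_inv, IsUnit.unit_spec, ← hRR, Matrix.mul_inv_rev]
    simp only [mul_assoc, nonsing_inv_mul _ hRdet, mul_one]
  have hsym : IsSelfAdjoint (R⁻¹ * P * R⁻¹) :=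
    hP.isSelfAdjoint.conjugate_self (IsHermitian.inv (CFC.sqrt_nonneg Q).isSelfAdjoint)
  have hbound : R⁻¹ * P * R⁻¹ ≤ algebraMap ℝ _ ‖P * Q⁻¹‖ := by
    refine le_algebraMap_of_spectrum_le (fun x hx => ?_) hsym
    rw [hsimilar, spectrum.units_conjugate'] at hx
    exact (Real.le_norm_self x).trans (spectrum.norm_le_norm_of_mem hx)
  calc P = R * (R⁻¹ * P * R⁻¹) * R := by
        simp only [← mul_assoc, mul_nonsing_inv _ hRdet, one_mul]
        rw [mul_assoc, nonsing_inv_mul _ hRdet, mul_one]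
    _ ≤ R * algebraMap ℝ _ ‖P * Q⁻¹‖ * R :=
        conjugate_le_conjugate_of_nonneg hbound (CFC.sqrt_nonneg Q)
    _ = ‖P * Q⁻¹‖ • Q := by
        rw [Algebra.algebraMap_eq_smul_one, mul_smul_comm, mul_one, smul_mul_assoc, hRR]

lemma norm_sub_le_of_le_of_le_smul {P Q : Matrix n n ℝ} {c : ℝ} (hc : 1 ≤ c) (hQP : Q ≤ P)
    (hPQ : P ≤ c • Q) : ‖P - Q‖ ≤ (c - 1) * ‖Q‖ := by
  nontriviality Matrix n n ℝ
  calc ‖P - Q‖ ≤ ‖(c - 1) • Q‖ := by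
        refine norm_le_norm_of_nonneg_of_le (sub_nonneg.2 hQP) ?_
        rw [sub_smul, one_smul]
        exact sub_le_sub_right hPQ Q
    _ = (c - 1) * ‖Q‖ := by rw [norm_smul, Real.norm_of_nonneg (by linarith)]

end Matrix

lemma rdist_nonneg {n : ℕ} (P Q : Matrix (Fin n) (Fin n) ℝ) : 0 ≤ rdist P Q :=
  Real.sqrt_nonneg _

lemma singVals_mul_inv_le_exp_rdist {n : ℕ} (P Q : Matrix (Fin n) (Fin n) ℝ) (i : Fin n) :
    singVals (P * Q⁻¹) i ≤ Real.exp (rdist P Q) := by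
  have hlog : |Real.log (singVals (P * Q⁻¹) i)| ≤ rdist P Q :=
    Real.abs_le_sqrt (Finset.single_le_sum (f := fun j => Real.log (singVals (P * Q⁻¹) j) ^ 2)
      (fun j _ => sq_nonneg _) (Finset.mem_univ i))
  calc singVals (P * Q⁻¹) i ≤ Real.exp (Real.log (singVals (P * Q⁻¹) i)) := Real.le_exp_log _
    _ ≤ Real.exp (rdist P Q) := Real.exp_le_exp.2 ((le_abs_self _).trans hlog)

lemma Matrix.norm_le_of_singVals_le {n : ℕ} {M : Matrix (Fin n) (Fin n) ℝ} {c : ℝ} (hc : 0 ≤ c)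
    (h : ∀ i, singVals M i ≤ c) : ‖M‖ ≤ c := by
  have hH : (Mᵀ * M).IsHermitian := by
    simpa using isHermitian_conjTranspose_mul_self M
  have hMM : ‖Mᵀ * M‖ ≤ c ^ 2 := by
    rw [← cfc_id ℝ (Mᵀ * M) hH.isSelfAdjoint]
    refine norm_cfc_le (sq_nonneg c) fun x hx => ?_
    obtain ⟨i, rfl⟩ := hH.spectrum_real_eq_range_eigenvalues ▸ hx
    have hev : 0 ≤ hH.eigenvalues i := by
      simpa using (posSemidef_conjTranspose_mul_self M).eigenvalues_nonneg i
    rw [id, Real.norm_of_nonneg hev, ← Real.sq_sqrt hev]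
    exact pow_le_pow_left₀ (Real.sqrt_nonneg _) (h i) 2
  rw [← conjTranspose_eq_transpose_of_trivial, l2_opNorm_conjTranspose_mul_self, ← sq] at hMM
  exact (pow_le_pow_iff_left₀ (norm_nonneg M) hc two_ne_zero).1 hMM

lemma Matrix.norm_mul_inv_le_exp_rdist {n : ℕ} (P Q : Matrix (Fin n) (Fin n) ℝ) :
    ‖P * Q⁻¹‖ ≤ Real.exp (rdist P Q) :=
  norm_le_of_singVals_le (Real.exp_nonneg _) (singVals_mul_inv_le_exp_rdist P Q)

lemma Matrix.norm_sub_le_exp_rdist_sub_one_mul {n : ℕ} {P Q : Matrix (Fin n) (Fin n) ℝ}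
    (hQ : Q.PosDef) (hQP : Q ≤ P) : ‖P - Q‖ ≤ (Real.exp (rdist P Q) - 1) * ‖Q‖ := by
  have hP : P.IsHermitian := by
    simpa using (le_iff.1 hQP).isHermitian.add hQ.isHermitian
  refine norm_sub_le_of_le_of_le_smul (Real.one_le_exp (rdist_nonneg P Q)) hQP ?_
  exact (le_norm_mul_inv_smul hP hQ).trans
    (smul_le_smul_of_nonneg_right (norm_mul_inv_le_exp_rdist P Q) hQ.posSemidef.nonneg)

lemma Real.exp_mul_sub_one_le (x : ℝ) {t : ℝ} (ht0 : 0 ≤ t) (ht1 : t ≤ 1) :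
    Real.exp (t * x) - 1 ≤ (Real.exp x - 1) * t := by
  have h := convexOn_exp.2 (Set.mem_univ 0) (Set.mem_univ x) (sub_nonneg.2 ht1) ht0 (by ring)
  simp only [smul_eq_mul, mul_zero, zero_add, Real.exp_zero, mul_one] at h
  linarith

lemma matSpectralNorm_eq_norm {n : ℕ} (M : Matrix (Fin n) (Fin n) ℝ) : matSpectralNorm M = ‖M‖ :=
  rfl

theorem cov_diff_exponential_bound_general {n : ℕ}
    (S Ss : ℕ → Matrix (Fin n) (Fin n) ℝ)
    (hSs : ∀ k, (Ss k).PosDef)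
    (v sig : ℝ) (hv0 : 0 ≤ v) (hv1 : v ≤ 1)
    (hd : ∀ k, rdist (S k) (Ss k) ≤ v ^ k * rdist (S 0) (Ss 0))
    (hle : ∀ k, (S k - Ss k).PosSemidef)
    (hsig : ∀ k, matSpectralNorm (S k) ≤ sig ∧ matSpectralNorm (Ss k) ≤ sig) :
    ∀ k, matSpectralNorm (S k - Ss k) ≤
      (Real.exp (rdist (S 0) (Ss 0)) - 1) * sig * v ^ k := by
  intro k
  simp only [matSpectralNorm_eq_norm] at hsig ⊢
  have hexp : Real.exp (rdist (S k) (Ss k)) - 1 ≤ (Real.exp (rdist (S 0) (Ss 0)) - 1) * v ^ k :=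
    calc Real.exp (rdist (S k) (Ss k)) - 1 ≤ Real.exp (v ^ k * rdist (S 0) (Ss 0)) - 1 := by
          gcongr; exact hd k
      _ ≤ _ := Real.exp_mul_sub_one_le _ (pow_nonneg hv0 k) (pow_le_one₀ hv0 hv1)
  have hexp_nonneg : 0 ≤ Real.exp (rdist (S k) (Ss k)) - 1 :=
    sub_nonneg.2 (Real.one_le_exp (rdist_nonneg _ _))
  calc ‖S k - Ss k‖ ≤ (Real.exp (rdist (S k) (Ss k)) - 1) * ‖Ss k‖ :=
        Matrix.norm_sub_le_exp_rdist_sub_one_mul (hSs k) (Matrix.le_iff.2 (hle k))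
    _ ≤ (Real.exp (rdist (S 0) (Ss 0)) - 1) * v ^ k * sig :=
        mul_le_mul hexp (hsig k).2 (norm_nonneg _) (hexp_nonneg.trans hexp)
    _ = (Real.exp (rdist (S 0) (Ss 0)) - 1) * sig * v ^ k := by ring

/-- If δ(Σ_k, Σ*_k) ≤ υ^k δ(Σ_0, Σ*_0) with 0 ≤ υ ≤ 1 and Σ*_k ≤ Σ_k, then
    ‖Σ_k − Σ*_k‖ ≤ κσυ^k with κ = e^{δ(Σ_0,Σ*_0)} − 1 and σ a uniform bound
    on ‖Σ_k‖, ‖Σ*_k‖. -/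
theorem cov_diff_exponential_bound {n : ℕ}
    (S Ss : ℕ → Matrix (Fin n) (Fin n) ℝ)
    (hS : ∀ k, (S k).PosDef) (hSs : ∀ k, (Ss k).PosDef)
    (v sig : ℝ) (hv0 : 0 ≤ v) (hv1 : v ≤ 1)
    (hd : ∀ k, rdist (S k) (Ss k) ≤ v ^ k * rdist (S 0) (Ss 0))
    (hle : ∀ k, (S k - Ss k).PosSemidef)
    (hsig : ∀ k, matSpectralNorm (S k) ≤ sig ∧ matSpectralNorm (Ss k) ≤ sig) :
    ∀ k, matSpectralNorm (S k - Ss k) ≤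
      (Real.exp (rdist (S 0) (Ss 0)) - 1) * sig * v ^ k :=
  cov_diff_exponential_bound_general S Ss hSs v sig hv0 hv1 hd hle hsig
end

section
/- Consider the Riccati difference equation Σ_{k+1} = A(Σ_k − Σ_k Cᵀ(CΣ_kCᵀ + R)⁻¹CΣ_k)Aᵀ + Q with R > 0, Q ≥ 0, and two solutions Σ_k, Σ'_k with initial values Σ_0 ≤ Σ'_0 (Loewner order). Then Σ_k ≤ Σ'_k for all k ≥ 0 (monotonicity of the Riccati recursion in its initial condition). -/
open Matrix
open scoped MatrixOrder

/-!
Completing the square shows that the measurement update `P - P Cᵀ (C P Cᵀ + R)⁻¹ C P` is the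
minimum, in the Loewner order, of the Joseph forms `(1 - K C) P (1 - K C)ᵀ + K R Kᵀ` over all
gains `K`: the Joseph form exceeds it by `(K - G) (C P Cᵀ + R) (K - G)ᵀ`, where `G` is the Kalman
gain of `P`. Each Joseph form is monotone in `P`, hence so is their minimum; conjugating by `A`
and adding `Q` preserve the order, and induction on `k` concludes. Positive semidefiniteness of
the iterates, which keeps `C P Cᵀ + R` invertible, is carried along the induction.
-/

theorem Matrix.PosSemidef.mul_mul_transpose_same {k n : Type*} [Fintype k] [Fintype n]
    {P : Matrix n n ℝ} (hP : P.PosSemidef) (X : Matrix k n ℝ) : (X * P * Xᵀ).PosSemidef := by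
  simpa using hP.mul_mul_conjTranspose_same X

theorem Matrix.PosSemidef.isSymm {n : Type*} {P : Matrix n n ℝ} (hP : P.PosSemidef) : P.IsSymm :=
  isHermitian_iff_isSymm.mp hP.isHermitian

theorem Matrix.PosSemidef.mul_mul_transpose_add_posDef {m n : Type*} [Fintype m] [Fintype n]
    {P : Matrix n n ℝ} {R : Matrix m m ℝ} (hP : P.PosSemidef) (hR : R.PosDef)
    (C : Matrix m n ℝ) : (C * P * Cᵀ + R).PosDef :=
  PosDef.posSemidef_add (hP.mul_mul_transpose_same C) hR

namespace Kalman

variable {m n : Type*} [Fintype m] [Fintype n] [DecidableEq n]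

section CommRing

variable {α : Type*} [CommRing α]

def josephUpdate (C : Matrix m n α) (R : Matrix m m α) (K : Matrix n m α) (P : Matrix n n α) :
    Matrix n n α :=
  (1 - K * C) * P * (1 - K * C)ᵀ + K * R * Kᵀ

theorem josephUpdate_sub_josephUpdate (C : Matrix m n α) (R : Matrix m m α) (K : Matrix n m α)
    (P P' : Matrix n n α) :
    josephUpdate C R K P' - josephUpdate C R K P = (1 - K * C) * (P' - P) * (1 - K * C)ᵀ := by
  simp only [josephUpdate, Matrix.mul_sub, Matrix.sub_mul]
  abel

variable [DecidableEq m]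

noncomputable section

def kalmanGain (C : Matrix m n α) (R : Matrix m m α) (P : Matrix n n α) : Matrix n m α :=
  P * Cᵀ * (C * P * Cᵀ + R)⁻¹

def measurementUpdate (C : Matrix m n α) (R : Matrix m m α) (P : Matrix n n α) : Matrix n n α :=
  P - kalmanGain C R P * C * P

def riccatiMap (A : Matrix n n α) (C : Matrix m n α) (Q : Matrix n n α) (R : Matrix m m α)
    (P : Matrix n n α) : Matrix n n α :=
  A * measurementUpdate C R P * Aᵀ + Q

end

theorem josephUpdate_eq_measurementUpdate_add {C : Matrix m n α} {R : Matrix m m α}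
    {P : Matrix n n α} (hP : P.IsSymm) (hR : R.IsSymm) (hM : IsUnit (C * P * Cᵀ + R).det)
    (K : Matrix n m α) :
    josephUpdate C R K P = measurementUpdate C R P +
      (K - kalmanGain C R P) * (C * P * Cᵀ + R) * (K - kalmanGain C R P)ᵀ := by
  set M := C * P * Cᵀ + R with hMdef
  have hMs : M.IsSymm := by
    simp only [IsSymm, hMdef, transpose_add, transpose_mul, transpose_transpose, hP.eq, hR.eq,
      Matrix.mul_assoc]
  have hGM : kalmanGain C R P * M = P * Cᵀ := by
    rw [kalmanGain, Matrix.mul_assoc, M.nonsing_inv_mul hM, Matrix.mul_one]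
  have hGt : (kalmanGain C R P)ᵀ = M⁻¹ * (C * P) := by
    rw [kalmanGain, transpose_mul, transpose_mul, transpose_nonsing_inv, hMs.eq, hP.eq,
      transpose_transpose]
  have hMM : K * M * (M⁻¹ * (C * P)) = K * (C * P) := by
    rw [Matrix.mul_assoc K, ← Matrix.mul_assoc M, M.mul_nonsing_inv hM, Matrix.one_mul]
  rw [Matrix.sub_mul, hGM, transpose_sub, hGt, josephUpdate, measurementUpdate, kalmanGain]
  simp only [Matrix.sub_mul, Matrix.mul_sub, hMM, transpose_sub, transpose_one, transpose_mul,
    Matrix.one_mul, Matrix.mul_one, Matrix.mul_assoc]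
  simp only [hMdef, Matrix.add_mul, Matrix.mul_add, Matrix.mul_assoc]
  abel

end CommRing

variable {C : Matrix m n ℝ} {R : Matrix m m ℝ} {P P' : Matrix n n ℝ}

theorem josephUpdate_posSemidef (hR : R.PosSemidef) (hP : P.PosSemidef) (K : Matrix n m ℝ) :
    (josephUpdate C R K P).PosSemidef :=
  (hP.mul_mul_transpose_same _).add (hR.mul_mul_transpose_same K)

theorem josephUpdate_mono (K : Matrix n m ℝ) (h : P ≤ P') :
    josephUpdate C R K P ≤ josephUpdate C R K P' := by
  rw [le_iff, josephUpdate_sub_josephUpdate]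
  exact h.mul_mul_transpose_same _

variable [DecidableEq m]

theorem josephUpdate_eq_measurementUpdate_add_of_posSemidef (hR : R.PosDef) (hP : P.PosSemidef)
    (K : Matrix n m ℝ) :
    josephUpdate C R K P = measurementUpdate C R P +
      (K - kalmanGain C R P) * (C * P * Cᵀ + R) * (K - kalmanGain C R P)ᵀ :=
  josephUpdate_eq_measurementUpdate_add hP.isSymm hR.posSemidef.isSymm
    ((isUnit_iff_isUnit_det _).mp (hP.mul_mul_transpose_add_posDef hR C).isUnit) K

theorem measurementUpdate_le_josephUpdate (hR : R.PosDef) (hP : P.PosSemidef)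
    (K : Matrix n m ℝ) : measurementUpdate C R P ≤ josephUpdate C R K P := by
  rw [le_iff, josephUpdate_eq_measurementUpdate_add_of_posSemidef hR hP, add_sub_cancel_left]
  exact (hP.mul_mul_transpose_add_posDef hR C).posSemidef.mul_mul_transpose_same _

theorem josephUpdate_kalmanGain (hR : R.PosDef) (hP : P.PosSemidef) :
    josephUpdate C R (kalmanGain C R P) P = measurementUpdate C R P := by
  simp [josephUpdate_eq_measurementUpdate_add_of_posSemidef hR hP]

theorem measurementUpdate_posSemidef (hR : R.PosDef) (hP : P.PosSemidef) :
    (measurementUpdate C R P).PosSemidef :=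
  josephUpdate_kalmanGain hR hP ▸ josephUpdate_posSemidef hR.posSemidef hP _

theorem measurementUpdate_mono (hR : R.PosDef) (hP : P.PosSemidef) (h : P ≤ P') :
    measurementUpdate C R P ≤ measurementUpdate C R P' := by
  have hP' : P'.PosSemidef := (hP.nonneg.trans h).posSemidef
  calc measurementUpdate C R P
      ≤ josephUpdate C R (kalmanGain C R P') P := measurementUpdate_le_josephUpdate hR hP _
    _ ≤ josephUpdate C R (kalmanGain C R P') P' := josephUpdate_mono _ h
    _ = measurementUpdate C R P' := josephUpdate_kalmanGain hR hP'

theorem riccatiMap_posSemidef (A : Matrix n n ℝ) {Q : Matrix n n ℝ} (hQ : Q.PosSemidef)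
    (hR : R.PosDef) (hP : P.PosSemidef) : (riccatiMap A C Q R P).PosSemidef :=
  ((measurementUpdate_posSemidef hR hP).mul_mul_transpose_same A).add hQ

theorem riccatiMap_mono (A Q : Matrix n n ℝ) (hR : R.PosDef) (hP : P.PosSemidef) (h : P ≤ P') :
    riccatiMap A C Q R P ≤ riccatiMap A C Q R P' := by
  rw [le_iff, riccatiMap, riccatiMap, add_sub_add_right_eq_sub, ← Matrix.sub_mul, ← Matrix.mul_sub]
  exact (measurementUpdate_mono hR hP h).mul_mul_transpose_same A

end Kalman

theorem riccati_monotone_general {n p : ℕ}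
    (A : Matrix (Fin n) (Fin n) ℝ) (C : Matrix (Fin p) (Fin n) ℝ)
    (Q : Matrix (Fin n) (Fin n) ℝ) (R : Matrix (Fin p) (Fin p) ℝ)
    (hQ : Q.PosSemidef) (hR : R.PosDef)
    (S S' : ℕ → Matrix (Fin n) (Fin n) ℝ)
    (hS0 : (S 0).PosSemidef)
    (hrec : ∀ k, S (k + 1) =
      A * (S k - S k * Cᵀ * (C * S k * Cᵀ + R)⁻¹ * C * S k) * Aᵀ + Q)
    (hrec' : ∀ k, S' (k + 1) =
      A * (S' k - S' k * Cᵀ * (C * S' k * Cᵀ + R)⁻¹ * C * S' k) * Aᵀ + Q)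
    (hinit : (S' 0 - S 0).PosSemidef) :
    ∀ k, (S' k - S k).PosSemidef := by
  suffices h : ∀ k, (S k).PosSemidef ∧ S k ≤ S' k from fun k => (h k).2
  intro k
  induction k with
  | zero => exact ⟨hS0, hinit⟩
  | succ k ih =>
    rw [hrec k, hrec' k]
    exact ⟨Kalman.riccatiMap_posSemidef A hQ hR ih.1, Kalman.riccatiMap_mono A Q hR ih.1 ih.2⟩

/-- Monotonicity of the Riccati difference recursion in the initial condition:
    if Σ_0 ≤ Σ'_0 in the Loewner order then Σ_k ≤ Σ'_k for all k. -/
theorem riccati_monotone {n p : ℕ}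
    (A : Matrix (Fin n) (Fin n) ℝ) (C : Matrix (Fin p) (Fin n) ℝ)
    (Q : Matrix (Fin n) (Fin n) ℝ) (R : Matrix (Fin p) (Fin p) ℝ)
    (hQ : Q.PosSemidef) (hR : R.PosDef)
    (S S' : ℕ → Matrix (Fin n) (Fin n) ℝ)
    (hS0 : (S 0).PosSemidef) (hS0' : (S' 0).PosSemidef)
    (hrec : ∀ k, S (k + 1) =
      A * (S k - S k * Cᵀ * (C * S k * Cᵀ + R)⁻¹ * C * S k) * Aᵀ + Q)
    (hrec' : ∀ k, S' (k + 1) =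
      A * (S' k - S' k * Cᵀ * (C * S' k * Cᵀ + R)⁻¹ * C * S' k) * Aᵀ + Q)
    (hinit : (S' 0 - S 0).PosSemidef) :
    ∀ k, (S' k - S k).PosSemidef :=
  riccati_monotone_general A C Q R hQ hR S S' hS0 hrec hrec' hinit
end
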